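/- Let (L, [·,·]) be a Lie algebra over ℂ of dimension at least 2 all of whose 1/2-derivations are trivial, i.e. every 1/2-derivation of L is a scalar multiple of the identity map. Then every transposed Poisson structure on (L, [·,·]) is trivial: any commutative associative multiplication · on L making (L, ·, [·,·]) a transposed Poisson algebra satisfies x·y = 0 for all x, y ∈ L. -/
import Mathlib


noncomputable section

/-- A `1/2`-derivation of a complex Lie algebra: a linear map `φ` with
`φ([x,y]) = (1/2)([φ(x),y] + [x,φ(y)])`. -/
def IsHalfDeriv {L : Type*} [LieRing L] [LieAlgebra ℂ L] (φ : L →ₗ[ℂ] L) : Prop :=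
  ∀ x y : L, φ ⁅x, y⁆ = (2⁻¹ : ℂ) • (⁅φ x, y⁆ + ⁅x, φ y⁆)

/-- Let `L` be a complex Lie algebra of dimension at least `2`
all of whose `1/2`-derivations are trivial (scalar multiples of the identity).
Then every transposed Poisson structure on `L` is trivial: every commutative
associative multiplication `·` on `L` satisfying the compatibility condition
`2 z·[x,y] = [z·x, y] + [x, z·y]` is identically zero. -/
theorem transposed_poisson_trivial_of_half_derivations_trivial
    (L : Type*) [LieRing L] [LieAlgebra ℂ L]
    (hdim : 2 ≤ Module.rank ℂ L)
    (htriv : ∀ φ : L →ₗ[ℂ] L, IsHalfDeriv φ → ∃ c : ℂ, φ = c • LinearMap.id)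
    (mul : L →ₗ[ℂ] L →ₗ[ℂ] L)
    (hcomm : ∀ x y : L, mul x y = mul y x)
    (hassoc : ∀ x y w : L, mul (mul x y) w = mul x (mul y w))
    (hcompat : ∀ x y w : L, (2 : ℂ) • mul w ⁅x, y⁆ = ⁅mul w x, y⁆ + ⁅x, mul w y⁆) :
    ∀ x y : L, mul x y = 0 := by
  -- every `mul z` is a scalar multiple of identity
  have key : ∀ z : L, ∃ c : ℂ, ∀ y : L, mul z y = c • y := by
    intro z
    have hhd : IsHalfDeriv (mul z) := by
      intro x y
      have h := hcompat x y z
      have : mul z ⁅x, y⁆ = (2⁻¹ : ℂ) • ((2 : ℂ) • mul z ⁅x, y⁆) := by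
        rw [smul_smul]; norm_num
      rw [this, h]
    obtain ⟨c, hc⟩ := htriv (mul z) hhd
    exact ⟨c, fun y => by rw [hc]; simp⟩
  intro z y
  obtain ⟨c, hc⟩ := key z
  rcases eq_or_ne z 0 with rfl | hz
  · simp
  -- find x not in span of z
  have hx : ∃ x : L, x ∉ Submodule.span ℂ {z} := by
    by_contra h
    push_neg at h
    have : Module.rank ℂ L ≤ 1 := by
      have h1 : (⊤ : Submodule ℂ L) = Submodule.span ℂ {z} :=
        le_antisymm (fun x _ => h x) le_top
      calc Module.rank ℂ L = Module.rank ℂ (⊤ : Submodule ℂ L) := (rank_top ℂ L).symm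
        _ = Module.rank ℂ (Submodule.span ℂ ({z} : Set L)) := by rw [h1]
        _ ≤ 1 := by
            have := rank_span_le (R := ℂ) ({z} : Set L)
            simpa using this
    have : (2 : Cardinal) ≤ 1 := le_trans hdim this
    norm_num at this
  obtain ⟨x, hxz⟩ := hx
  obtain ⟨d, hd⟩ := key x
  have hcz : c • x = d • z := by rw [← hc x, ← hd z, hcomm]
  have hc0 : c = 0 := by
    by_contra h
    apply hxz
    have : x = c⁻¹ • (d • z) := by rw [← hcz, smul_smul, inv_mul_cancel₀ h, one_smul]
    rw [this]
    exact Submodule.smul_mem _ _ (Submodule.smul_mem _ _ (Submodule.mem_span_singleton_self z))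
  rw [hc y, hc0, zero_smul]
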